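/- arXiv:0808.0866 — 5 statements merged into one kernel-verified Lean document; each statement's English description precedes it below -/
import Mathlib

section
/- Let τ : A → A⁺ be a substitution on a finite alphabet A extended to two-sided sequences. Let (aₙbₙcₙ)_{n∈ℕ} be a sequence of words of length 3 over A and (dₙ)_{n∈ℕ} integers with 0 ≤ dₙ ≤ pⁿ − 1, where τ has constant length p ≥ 2. Then the intersection over all n of T^{dₙ}τⁿ([aₙ.bₙcₙ]) contains at most one point, where [u.v] denotes the cylinder set of sequences x with x(−|u|,−1) = u and x(0,|v|−1) = v, and T is the shift. -/
/-- Extension of a substitution to finite words, by concatenation. -/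
def substWord {A : Type*} (τ : A → List A) (w : List A) : List A :=
  (w.map τ).flatten

/-- The shift map on two-sided sequences. -/
def shift {A : Type*} (x : ℤ → A) : ℤ → A := fun i => x (i + 1)

/-- Extension of a constant-length-`p` substitution to two-sided sequences:
the block `τ(x_q)` occupies coordinates `[pq, pq + p)` of `τ(x)`. -/
def substExt {A : Type*} [Inhabited A] (τ : A → List A) (p : ℕ) (x : ℤ → A) :
    ℤ → A :=
  fun i => (τ (x (i / (p : ℤ)))).getD (i % (p : ℤ)).toNat default

/-- A substitution is primitive if some power sends every letter to a word
containing every letter. -/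
def IsPrimitive {A : Type*} (τ : A → List A) : Prop :=
  ∃ n : ℕ, ∀ a b : A, a ∈ (substWord τ)^[n] [b]

/-- The subshift generated by `τ`: sequences all of whose finite subwords occur
in some `τⁿ(a)`. -/
def XSet {A : Type*} (τ : A → List A) : Set (ℤ → A) :=
  {x | ∀ (i : ℤ) (l : ℕ), ∃ (n : ℕ) (c : A),
    (List.ofFn fun j : Fin l => x (i + (j : ℤ))) <:+: (substWord τ)^[n] [c]}

/-- Proximality of a pair for the shift on `A^ℤ` (with the product topology):
arbitrarily large central windows agree at some arbitrarily late time. -/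
def IsProximalPair {A : Type*} (x y : ℤ → A) : Prop :=
  ∀ N M : ℕ, ∃ n : ℕ, M ≤ n ∧ ∀ j : ℤ, |j| ≤ (N : ℤ) → x (j + n) = y (j + n)

/-- A Li–Yorke pair for the shift on `A^ℤ`: proximal but not asymptotic
(the two sequences differ at infinitely many coordinates). -/
def IsLiYorkePair {A : Type*} (x y : ℤ → A) : Prop :=
  IsProximalPair x y ∧ {m : ℤ | x m ≠ y m}.Infinite

/-- The cylinder `[u.v]`: `u` occurs just before coordinate `0` and `v` starts
at coordinate `0`. -/
def cyl {A : Type*} [Inhabited A] (u v : List A) : Set (ℤ → A) :=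
  {x | (∀ j : ℕ, j < u.length → x ((j : ℤ) - u.length) = u.getD j default) ∧
    (∀ j : ℕ, j < v.length → x (j : ℤ) = v.getD j default)}

/-!
Since `τ(y)ᵢ` depends only on `y_{⌊i/p⌋}`, the coordinates `[pⁿ lo, pⁿ hi)` of `τⁿ(y)`
depend only on the coordinates `[lo, hi)` of `y`. So all points of `τⁿ([aₙ.bₙcₙ])` agree on
`[-pⁿ, 2pⁿ)`, and after the shift by `dₙ < pⁿ` all points of the `n`-th set agree on
`(-pⁿ, pⁿ)`, which exhausts `ℤ` as `n → ∞`.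
-/

lemma shift_iterate_apply {A : Type*} (m : ℕ) (y : ℤ → A) (i : ℤ) :
    shift^[m] y i = y (i + m) := by
  induction m generalizing i with
  | zero => simp
  | succ m ih =>
    rw [Function.iterate_succ_apply', shift, ih]
    push_cast
    ring_nf

lemma cyl_eqOn {A : Type*} [Inhabited A] {u v : List A} {x x' : ℤ → A}
    (hx : x ∈ cyl u v) (hx' : x' ∈ cyl u v) :
    Set.EqOn x x' (Set.Ico (-(u.length : ℤ)) v.length) := by
  rintro i ⟨hlo, hhi⟩
  rcases lt_or_ge i 0 with hneg | hnonneg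
  · obtain ⟨j, rfl⟩ : ∃ j : ℕ, i = (j : ℤ) - u.length := ⟨(i + u.length).toNat, by omega⟩
    rw [hx.1 j (by omega), hx'.1 j (by omega)]
  · obtain ⟨j, rfl⟩ := Int.eq_ofNat_of_zero_le hnonneg
    rw [hx.2 j (by omega), hx'.2 j (by omega)]

section substExt

variable {A : Type*} [Inhabited A] (τ : A → List A) {p : ℕ}

lemma substExt_eqOn (hp : 0 < p) {y y' : ℤ → A} {lo hi : ℤ}
    (h : Set.EqOn y y' (Set.Ico lo hi)) :
    Set.EqOn (substExt τ p y) (substExt τ p y') (Set.Ico (p * lo) (p * hi)) := by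
  rintro i ⟨hlo, hhi⟩
  have hp' : (0 : ℤ) < p := by exact_mod_cast hp
  have hq : i / p ∈ Set.Ico lo hi :=
    ⟨(Int.le_ediv_iff_mul_le hp').2 (by linarith),
      (Int.ediv_lt_iff_lt_mul hp').2 (by linarith)⟩
  simp only [substExt, h hq]

lemma substExt_iterate_eqOn (hp : 0 < p) {y y' : ℤ → A} {lo hi : ℤ}
    (h : Set.EqOn y y' (Set.Ico lo hi)) (n : ℕ) :
    Set.EqOn ((substExt τ p)^[n] y) ((substExt τ p)^[n] y')
      (Set.Ico ((p : ℤ) ^ n * lo) ((p : ℤ) ^ n * hi)) := by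
  induction n with
  | zero => simpa using h
  | succ n ih =>
    rw [Function.iterate_succ_apply', Function.iterate_succ_apply', pow_succ', mul_assoc,
      mul_assoc]
    exact substExt_eqOn τ hp ih

end substExt

theorem stmt5_general {A : Type*} [Inhabited A] (τ : A → List A) (p : ℕ)
    (hp : 2 ≤ p)
    (a b c : ℕ → A) (d : ℕ → ℕ) (hd : ∀ n, d n ≤ p ^ n - 1) :
    Set.Subsingleton
      (⋂ n : ℕ, shift^[d n] '' ((substExt τ p)^[n] '' cyl [a n] [b n, c n])) := by
  intro x hx x' hx'
  simp only [Set.mem_iInter] at hx hx'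
  funext i
  set n := i.natAbs
  have hi : (n : ℤ) < (p : ℤ) ^ n := by
    exact_mod_cast Nat.lt_two_pow_self.trans_le (Nat.pow_le_pow_left hp n)
  have hdn : (d n : ℤ) < (p : ℤ) ^ n := by
    have hpos := Nat.one_le_pow n p (by omega)
    have hlt : d n < p ^ n := by have := hd n; omega
    exact_mod_cast hlt
  obtain ⟨y, ⟨z, hz, rfl⟩, rfl⟩ := hx n
  obtain ⟨y', ⟨z', hz', rfl⟩, rfl⟩ := hx' n
  rw [shift_iterate_apply, shift_iterate_apply]
  refine substExt_iterate_eqOn τ (by omega) (cyl_eqOn hz hz') n ⟨?_, ?_⟩ <;>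
    simp only [List.length_cons, List.length_nil] <;> push_cast <;> omega

/-- Lemma 2.5: the intersection `⋂ₙ T^{dₙ} τⁿ([aₙ.bₙcₙ])` contains at most one
point, where `0 ≤ dₙ ≤ pⁿ - 1`. -/
theorem stmt5 {A : Type*} [Fintype A] [Inhabited A] (τ : A → List A) (p : ℕ)
    (hp : 2 ≤ p) (hlen : ∀ a : A, (τ a).length = p)
    (a b c : ℕ → A) (d : ℕ → ℕ) (hd : ∀ n, d n ≤ p ^ n - 1) :
    Set.Subsingleton
      (⋂ n : ℕ, shift^[d n] '' ((substExt τ p)^[n] '' cyl [a n] [b n, c n])) :=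
  stmt5_general τ p hp a b c d hd
end

section
/- Let τ : A → A⁺ be a primitive substitution, B ⊆ A such that for each a ∈ A there is a unique b ∈ B with τ(a) = τ(b), and φ : A → B defined by φ(a) = b when τ(a) = τ(b). Let τ̄ : B → B⁺ be the unique substitution with τ̄∘φ = φ∘τ. Then τ̄ is primitive, and for every x in the subshift X_τ, τ(φ(x)) = τ(x). -/
/-!
The letter map `φ` semiconjugates `τ` to `τ̄` on words, hence on all iterates, and it is
surjective because `φ ∘ ι = id`. A surjective semiconjugacy carries "every letter occurs in
`τⁿ(b)`" over to `τ̄`.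
-/

section Semiconj

variable {A B : Type*} {τ : A → List A} {σ : B → List B} {φ : A → B}

theorem substWord_map (h : ∀ a, (τ a).map φ = σ (φ a)) (w : List A) :
    (substWord τ w).map φ = substWord σ (w.map φ) := by
  simp only [substWord, List.map_flatten, List.map_map]
  exact congrArg List.flatten (List.map_congr_left fun a _ => h a)

theorem iterate_substWord_map (h : ∀ a, (τ a).map φ = σ (φ a)) (n : ℕ) (w : List A) :
    ((substWord τ)^[n] w).map φ = (substWord σ)^[n] (w.map φ) := by
  induction n generalizing w with
  | zero => rfl
  | succ n ih =>
    rw [Function.iterate_succ_apply', Function.iterate_succ_apply', substWord_map h, ih]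

theorem IsPrimitive.of_semiconj (hτ : IsPrimitive τ) (h : ∀ a, (τ a).map φ = σ (φ a))
    (hφ : Function.Surjective φ) : IsPrimitive σ := by
  obtain ⟨n, hn⟩ := hτ
  refine ⟨n, fun b' b => ?_⟩
  obtain ⟨a', rfl⟩ := hφ b'
  obtain ⟨a, rfl⟩ := hφ b
  simpa [iterate_substWord_map h] using List.mem_map_of_mem (f := φ) (hn a' a)

end Semiconj

theorem stmt7_general {A B : Type*}
    (τ : A → List A) (ι : B → A) (φ : A → B)
    (hφ : ∀ a : A, τ (ι (φ a)) = τ a)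
    (huniq : ∀ (a : A) (b : B), τ a = τ (ι b) → b = φ a)
    (τbar : B → List B) (hcomm : ∀ a : A, (τ a).map φ = τbar (φ a))
    (hprim : IsPrimitive τ) :
    IsPrimitive τbar ∧
      ∀ x ∈ XSet τ, ∀ i : ℤ, τ (ι (φ (x i))) = τ (x i) := by
  have hsurj : Function.Surjective φ := fun b => ⟨ι b, (huniq (ι b) b rfl).symm⟩
  exact ⟨hprim.of_semiconj hcomm hsurj, fun x _ i => hφ (x i)⟩

/-- Reduction of a primitive substitution: with `ι : B ↪ A`, `φ : A → B`
selecting the unique letter of `B` with the same image, and `τ̄` the induced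
substitution on `B` (`φ∘τ = τ̄∘φ` letterwise extended), the reduction `τ̄` is
primitive and `τ(φ(x)) = τ(x)` (blockwise) for every `x ∈ X_τ`. -/
theorem stmt7 {A B : Type*} [Fintype A] [Fintype B]
    (τ : A → List A) (ι : B → A) (hι : Function.Injective ι) (φ : A → B)
    (hφ : ∀ a : A, τ (ι (φ a)) = τ a)
    (huniq : ∀ (a : A) (b : B), τ a = τ (ι b) → b = φ a)
    (τbar : B → List B) (hcomm : ∀ a : A, (τ a).map φ = τbar (φ a))
    (hprim : IsPrimitive τ) :
    IsPrimitive τbar ∧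
      ∀ x ∈ XSet τ, ∀ i : ℤ, τ (ι (φ (x i))) = τ (x i) :=
  stmt7_general τ ι φ hφ huniq τbar hcomm hprim
end

section
/- Let τ : A → A⁺ be a primitive substitution and τ̄ its reduction as above. If the reduced subshift X_{τ̄} is finite, then X_τ is finite. -/
/-!
If `x ∈ X_τ`, then `φ ∘ x` lies in the finite shift-invariant set `X_τ̄`, so it is periodic, of
period `P` say. Since `τ a = τ (ι (φ a))`, the sequence of blocks `τ ∘ x` is `P`-periodic as well,
so the words `τ(x₀ ⋯ x_{kP-1}) = Wᵏ`, with `W = τ(x₀ ⋯ x_{P-1})`, all belong to the language of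
`τ`. A primitive substitution is uniformly recurrent, hence every word of its language is a factor
of some `Wᵏ`. This forces every point of `X_τ` to be `|W|`-periodic, and over a finite alphabet
there are only finitely many such sequences.
-/

open Function

section Lists

variable {α β : Type*}

lemma List.infix_of_append_eq_append {s w t a b c : List α} (h : s ++ w ++ t = a ++ b ++ c)
    (hs : s.length ≤ a.length) (hw : a.length + b.length ≤ s.length + w.length) :
    b <:+: w := by
  have hlen := congrArg List.length h
  simp only [List.length_append] at hlen
  refine List.infix_iff_getElem?.2 ⟨a.length - s.length, by omega, fun i hi => ?_⟩
  have hi' := congrArg (·[a.length + i]?) h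
  simp only [List.append_assoc] at hi'
  rw [List.getElem?_append_right (by omega), List.getElem?_append_left (by omega),
    List.getElem?_append_right (by omega), List.getElem?_append_left (by omega)] at hi'
  simpa [show a.length + i - s.length = i + (a.length - s.length) by omega,
    List.getElem?_eq_getElem hi] using hi'

lemma List.exists_infix_of_infix_flatMap {g : α → List β} {G : ℕ}
    (hG : ∀ a, (g a).length ≤ G) {w : List β} (hw : 2 * G < w.length) :
    ∀ {l : List α}, w <:+: l.flatMap g → ∃ a ∈ l, g a <:+: w
  | [], h => by have := h.length_le; simp only [List.flatMap_nil, List.length_nil] at this; omega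
  | a :: l, ⟨s, t, hst⟩ => by
    rw [List.flatMap_cons] at hst
    have hlen := congrArg List.length hst
    simp only [List.length_append] at hlen
    by_cases hs : (g a).length ≤ s.length
    · have hinf : w <:+: l.flatMap g := ⟨s.drop (g a).length, t, by
        simpa [List.drop_append_of_le_length, hs] using congrArg (List.drop (g a).length) hst⟩
      obtain ⟨b, hb, hbw⟩ := List.exists_infix_of_infix_flatMap hG hw hinf
      exact ⟨b, List.mem_cons_of_mem a hb, hbw⟩
    · cases l with
      | nil => have := hG a; simp only [List.flatMap_nil, List.length_nil, add_zero] at hlen; omega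
      | cons b l =>
        rw [List.flatMap_cons, ← List.append_assoc] at hst
        have := hG a
        have := hG b
        exact ⟨b, by simp, List.infix_of_append_eq_append hst (by omega) (by omega)⟩

lemma List.getElem?_add_length_of_infix_flatten_replicate {W u : List α} {k : ℕ}
    (hu : u <:+: (List.replicate k W).flatten) {j : ℕ} (hj : j + W.length < u.length) :
    u[j + W.length]? = u[j]? := by
  obtain ⟨o, ho, hget⟩ := List.infix_iff_getElem?.1 hu
  rw [List.getElem?_eq_getElem hj, List.getElem?_eq_getElem (by omega), ← Option.some_inj,
    ← hget, ← hget]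
  cases k with
  | zero => simp only [List.replicate_zero, List.flatten_nil, List.length_nil] at ho; omega
  | succ k =>
    have hsucc : (List.replicate (k + 1) W).flatten = (List.replicate k W).flatten ++ W := by
      rw [List.replicate_succ', List.flatten_append, List.flatten_singleton]
    have hlen := congrArg List.length hsucc
    simp only [List.length_append] at hlen
    rw [show j + W.length + o = W.length + (j + o) by omega]
    nth_rw 1 [List.replicate_succ, List.flatten_cons]
    rw [List.getElem?_append_right (by omega), hsucc, List.getElem?_append_left (by omega)]
    simp

end Lists

section Windows

variable {β : Type*}

def window (x : ℤ → β) (i : ℤ) (l : ℕ) : List β :=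
  List.ofFn fun j : Fin l => x (i + j)

lemma window_add (x : ℤ → β) (i : ℤ) (a b : ℕ) :
    window x i (a + b) = window x i a ++ window x (i + a) b := by
  simp only [window, List.ofFn_add, Fin.val_castLE, Fin.val_natAdd, Nat.cast_add, add_assoc]

lemma Function.Periodic.window_mul {x : ℤ → β} {P : ℕ} (hx : Periodic x P) (k : ℕ) :
    window x 0 (k * P) = (List.replicate k (window x 0 P)).flatten := by
  induction k with
  | zero => simp [window]
  | succ k ih =>
    have hshift : window x (k * P : ℕ) P = window x 0 P := by
      simp only [window, Nat.cast_mul, zero_add, add_comm (k * P : ℤ), (hx.nat_mul k) _]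
    rw [Nat.succ_mul, window_add, ih, zero_add, hshift, List.replicate_succ',
      List.flatten_append, List.flatten_singleton]

lemma periodic_of_forall_window_infix_flatten_replicate {x : ℤ → β} {W : List β}
    (h : ∀ i l, ∃ k, window x i l <:+: (List.replicate k W).flatten) : Periodic x W.length := by
  intro i
  obtain ⟨k, hk⟩ := h i (W.length + 1)
  have := List.getElem?_add_length_of_infix_flatten_replicate hk (j := 0) (by simp [window])
  simpa [window, List.getElem?_ofFn, -List.ofFn_succ] using this

lemma finite_setOf_periodic [Finite β] {Q : ℕ} (hQ : 0 < Q) :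
    {x : ℤ → β | Periodic x Q}.Finite := by
  refine Set.Finite.of_finite_image (f := fun x (j : Fin Q) => x j) (Set.toFinite _) ?_
  intro x hx y hy hxy
  funext m
  have hQ' : (0 : ℤ) < Q := by exact_mod_cast hQ
  have hm : m % Q = ((m % Q).toNat : ℤ) := (Int.toNat_of_nonneg (Int.emod_nonneg m hQ'.ne')).symm
  have hlt : (m % Q).toNat < Q := by have := Int.emod_lt_of_pos m hQ'; omega
  have hred : ∀ z : ℤ → β, Periodic z Q → z m = z (m % Q) := fun z hz => by
    rw [Int.emod_def, mul_comm]; exact (hz.sub_int_mul_eq _).symm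
  rw [hred x hx, hred y hy, hm]
  exact congrFun hxy ⟨_, hlt⟩

end Windows

section Substitutions

variable {A B : Type*}

section Words

variable (τ : A → List A)

lemma substWord_eq_flatMap (w : List A) : substWord τ w = w.flatMap τ := rfl

@[simp] lemma substWord_singleton (a : A) : substWord τ [a] = τ a := by
  simp [substWord]

lemma substWord_append (v w : List A) :
    substWord τ (v ++ w) = substWord τ v ++ substWord τ w := by
  simp [substWord_eq_flatMap]

@[simp] lemma iterate_substWord_nil (n : ℕ) : (substWord τ)^[n] [] = [] :=
  iterate_fixed rfl n

lemma iterate_substWord_append (n : ℕ) (v w : List A) :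
    (substWord τ)^[n] (v ++ w) = (substWord τ)^[n] v ++ (substWord τ)^[n] w := by
  induction n generalizing v w with
  | zero => rfl
  | succ n ih => simp only [iterate_succ_apply, substWord_append, ih]

lemma iterate_substWord_eq_flatMap (n : ℕ) (w : List A) :
    (substWord τ)^[n] w = w.flatMap fun a => (substWord τ)^[n] [a] := by
  induction w with
  | nil => simp
  | cons a w ih =>
    rw [← List.singleton_append, iterate_substWord_append, ih, List.flatMap_append,
      List.flatMap_singleton]

lemma iterate_substWord_infix {u v : List A} (h : u <:+: v) (n : ℕ) :
    (substWord τ)^[n] u <:+: (substWord τ)^[n] v := by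
  induction n generalizing u v with
  | zero => exact h
  | succ n ih => exact ih (h.flatMap τ)

lemma length_iterate_substWord_le {p : ℕ} (hp : ∀ a, (τ a).length ≤ p) (n : ℕ)
    (w : List A) : ((substWord τ)^[n] w).length ≤ p ^ n * w.length := by
  induction n generalizing w with
  | zero => simp
  | succ n ih =>
    have hlen : (substWord τ w).length ≤ p * w.length := by
      rw [substWord_eq_flatMap, List.length_flatMap, mul_comm]
      simpa using List.sum_le_card_nsmul (w.map fun a => (τ a).length) p
        (by simp only [List.mem_map]; rintro _ ⟨a, -, rfl⟩; exact hp a)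
    calc ((substWord τ)^[n] (substWord τ w)).length ≤ p ^ n * (substWord τ w).length := ih _
      _ ≤ p ^ n * (p * w.length) := Nat.mul_le_mul_left _ hlen
      _ = p ^ (n + 1) * w.length := by ring

lemma semiconj_map_substWord {τbar : B → List B} {φ : A → B}
    (hcomm : ∀ a, (τ a).map φ = τbar (φ a)) :
    Semiconj (List.map φ) (substWord τ) (substWord τbar) := fun w => by
  simp [substWord_eq_flatMap, List.map_flatMap, List.flatMap_map, hcomm]

end Words

lemma substWord_window (τ : A → List A) (x : ℤ → A) (i : ℤ) (l : ℕ) :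
    substWord τ (window x i l) = (window (τ ∘ x) i l).flatten := by
  simp [substWord, window, List.map_ofFn, comp_def]

lemma Function.Periodic.substWord_window_mul {τ : A → List A} {x : ℤ → A} {P : ℕ}
    (hx : Periodic (τ ∘ x) P) (k : ℕ) :
    substWord τ (window x 0 (k * P)) = (List.replicate k (substWord τ (window x 0 P))).flatten := by
  simp [substWord_window, hx.window_mul, List.flatten_flatten, List.map_replicate]

section Language

variable {τ : A → List A}

def language (τ : A → List A) : Set (List A) :=
  {w | ∃ (n : ℕ) (c : A), w <:+: (substWord τ)^[n] [c]}

lemma mem_XSet_iff {x : ℤ → A} : x ∈ XSet τ ↔ ∀ i l, window x i l ∈ language τ := Iff.rfl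

lemma substWord_mem_language {w : List A} (hw : w ∈ language τ) :
    substWord τ w ∈ language τ := by
  obtain ⟨n, c, h⟩ := hw
  exact ⟨n + 1, c, by rw [iterate_succ_apply']; exact h.flatMap τ⟩

lemma map_mem_language {τbar : B → List B} {φ : A → B}
    (hcomm : ∀ a, (τ a).map φ = τbar (φ a)) {w : List A} (hw : w ∈ language τ) :
    w.map φ ∈ language τbar := by
  obtain ⟨n, c, h⟩ := hw
  refine ⟨n, φ c, ?_⟩
  simpa [((semiconj_map_substWord τ hcomm).iterate_right n).eq] using h.map φ

lemma comp_mem_XSet {τbar : B → List B} {φ : A → B}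
    (hcomm : ∀ a, (τ a).map φ = τbar (φ a)) {x : ℤ → A} (hx : x ∈ XSet τ) :
    φ ∘ x ∈ XSet τbar := mem_XSet_iff.2 fun i l => by
  simpa [window, List.map_ofFn, comp_def] using map_mem_language hcomm (hx i l)

lemma shift_mem_XSet {x : ℤ → A} (hx : x ∈ XSet τ) : shift x ∈ XSet τ := fun i l => by
  simpa [shift, add_right_comm] using hx (i + 1) l

lemma shift_injective : Injective (shift : (ℤ → A) → ℤ → A) := fun x y h => funext fun i => by
  simpa [shift] using congrFun h (i - 1)

lemma iterate_shift_apply (x : ℤ → A) (n : ℕ) (i : ℤ) : shift^[n] x i = x (i + n) := by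
  induction n generalizing x with
  | zero => simp
  | succ n ih => rw [iterate_succ_apply, ih, shift, Nat.cast_succ, add_assoc]

/-- The shift permutes the finitely many points of a finite subshift. -/
lemma exists_periodic_of_mem_XSet (hfin : (XSet τ).Finite) {x : ℤ → A} (hx : x ∈ XSet τ) :
    ∃ P : ℕ, 0 < P ∧ Periodic x P := by
  have : Finite (XSet τ) := hfin.to_subtype
  have hmaps : Set.MapsTo shift (XSet τ) (XSet τ) := fun _ => shift_mem_XSet
  have hinj : Injective (hmaps.restrict shift _ _) := fun y z h =>
    Subtype.ext (shift_injective (congrArg Subtype.val h))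
  obtain ⟨P, hP, hper⟩ := mem_periodicPts.1 (hinj.mem_periodicPts ⟨x, hx⟩)
  refine ⟨P, hP, fun i => ?_⟩
  have := congrFun (congrArg Subtype.val hper) i
  rwa [hmaps.coe_iterate_restrict, iterate_shift_apply] at this

end Language

section Primitive

variable {τ : A → List A}

lemma IsPrimitive.subsingleton_or_forall_ne_nil (hτ : IsPrimitive τ) :
    Subsingleton A ∨ ∀ a, τ a ≠ [] := by
  obtain ⟨M, hM⟩ := hτ
  cases M with
  | zero => exact Or.inl ⟨fun a b => by simpa using hM a b⟩
  | succ M =>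
    refine Or.inr fun a ha => ?_
    simpa [iterate_succ_apply, ha] using hM a a

theorem IsPrimitive.exists_forall_infix [Finite A] (hτ : IsPrimitive τ) {u : List A}
    (hu : u ∈ language τ) : ∃ L, ∀ w ∈ language τ, L < w.length → u <:+: w := by
  obtain ⟨M, hM⟩ := hτ
  obtain ⟨n, c, hu⟩ := hu
  obtain ⟨p, hp⟩ := Finite.exists_le fun a => (τ a).length
  have hp' : ∀ a, (τ a).length ≤ p + 1 := fun a => (hp a).trans p.le_succ
  set G := (p + 1) ^ (n + M)
  refine ⟨2 * G, fun w ⟨m, d, hw⟩ hlen => ?_⟩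
  have hlen_le : ∀ k e, ((substWord τ)^[k] [e]).length ≤ (p + 1) ^ k := fun k e => by
    simpa using length_iterate_substWord_le τ hp' k [e]
  -- the blocks `τ^(n+M)(e)` tile `τ^m(d)` and each of them contains `τ^n(c)`
  have hm : n + M ≤ m := by
    by_contra! hm
    have := (hw.length_le.trans (hlen_le m d)).trans (Nat.pow_le_pow_right (by omega) hm.le)
    omega
  rw [← Nat.add_sub_cancel' hm, iterate_add_apply, iterate_substWord_eq_flatMap] at hw
  obtain ⟨e, -, he⟩ := List.exists_infix_of_infix_flatMap (hlen_le (n + M)) hlen hw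
  have hce : (substWord τ)^[n] [c] <:+: (substWord τ)^[n + M] [e] := by
    rw [iterate_add_apply]
    exact iterate_substWord_infix τ ((List.singleton_infix_iff _ _).2 (hM c e)) n
  exact hu.trans (hce.trans he)

lemma IsPrimitive.XSet_subset_setOf_periodic [Finite A] (hτ : IsPrimitive τ) {W : List A}
    (hW : W ≠ []) (hpow : ∀ k, (List.replicate k W).flatten ∈ language τ) :
    XSet τ ⊆ {x | Periodic x W.length} := fun x hx =>
  periodic_of_forall_window_infix_flatten_replicate fun i l => by
    obtain ⟨L, hL⟩ := hτ.exists_forall_infix (mem_XSet_iff.1 hx i l)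
    refine ⟨L + 1, hL _ (hpow _) ?_⟩
    have := List.length_pos_iff.2 hW
    simp only [List.length_flatten, List.map_replicate, List.sum_replicate, smul_eq_mul]
    nlinarith

end Primitive

end Substitutions

theorem stmt8_general {A B : Type*} [Fintype A]
    (τ : A → List A) (ι : B → A) (φ : A → B)
    (hφ : ∀ a : A, τ (ι (φ a)) = τ a)
    (τbar : B → List B) (hcomm : ∀ a : A, (τ a).map φ = τbar (φ a))
    (hprim : IsPrimitive τ)
    (hfin : (XSet τbar).Finite) :
    (XSet τ).Finite := by
  rcases hprim.subsingleton_or_forall_ne_nil with hA | hne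
  · exact Set.toFinite _
  obtain hempty | ⟨x, hx⟩ := (XSet τ).eq_empty_or_nonempty
  · exact hempty ▸ Set.finite_empty
  obtain ⟨P, hP, hper⟩ := exists_periodic_of_mem_XSet hfin (comp_mem_XSet hcomm hx)
  have hτx : Periodic (τ ∘ x) P := by
    simpa [comp_def, hφ] using hper.comp (τ ∘ ι)
  set W := substWord τ (window x 0 P)
  have hW : W ≠ [] := by
    simpa [W, substWord_eq_flatMap, window, List.flatMap_eq_nil_iff, hne] using
      Fin.pos_iff_nonempty.1 hP
  have hpow : ∀ k, (List.replicate k W).flatten ∈ language τ := fun k => by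
    rw [← hτx.substWord_window_mul]
    exact substWord_mem_language (mem_XSet_iff.1 hx 0 _)
  exact (finite_setOf_periodic (List.length_pos_iff.2 hW)).subset
    (hprim.XSet_subset_setOf_periodic hW hpow)

/-- If the reduced subshift `X_τ̄` is finite then `X_τ` is finite. -/
theorem stmt8 {A B : Type*} [Fintype A] [Fintype B]
    (τ : A → List A) (ι : B → A) (hι : Function.Injective ι) (φ : A → B)
    (hφ : ∀ a : A, τ (ι (φ a)) = τ a)
    (huniq : ∀ (a : A) (b : B), τ a = τ (ι b) → b = φ a)
    (τbar : B → List B) (hcomm : ∀ a : A, (τ a).map φ = τbar (φ a))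
    (hprim : IsPrimitive τ)
    (hfin : (XSet τbar).Finite) :
    (XSet τ).Finite :=
  stmt8_general τ ι φ hφ τbar hcomm hprim hfin
end

section
/- Let τ : A → A⁺ be a primitive substitution of constant length p with X_τ infinite, τ one-to-one on X_τ, and suppose the factor map π : X_τ → O_p to the p-odometer satisfies: whenever π(x) = π(y), the points x,y have the same desubstitution digit sequence and suffix words sᵢ. If τ has overall coincidences (for every a ≠ b in A, τ(a) and τ(b) agree in at least one position), then every pair x ≠ y with π(x) = π(y) is proximal. -/
/-!
Unwinding `i` desubstitution steps, the window of length `p ^ i` of `x` starting at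
`p ^ i * m - (δ₀ + δ₁ p + ⋯ + δᵢ₋₁ pⁱ⁻¹)` is determined by the letter `x⁽ⁱ⁾ m` alone. Since `x` and
`y` share their digits, a coincidence `x⁽ⁱ⁾ m = y⁽ⁱ⁾ m` therefore forces `x` and `y` to agree on a
window of length `p ^ i`. Overall coincidences provide such an `m` in every block of the image
`τ(x⁽ⁱ⁺¹⁾)`, hence arbitrarily far to the right, at every level `i`.
-/

open Finset

theorem isProximalPair_of_forall_exists_agree {A : Type*} {x y : ℤ → A}
    (h : ∀ L B : ℕ, ∃ s : ℤ, B ≤ s ∧ ∀ r : ℕ, r < L → x (s + r) = y (s + r)) :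
    IsProximalPair x y := by
  intro N M
  obtain ⟨s, hMs, hagree⟩ := h (2 * N + 1) M
  refine ⟨s.toNat + N, by omega, fun j hj => ?_⟩
  obtain ⟨hj₁, hj₂⟩ := abs_le.mp hj
  have hjs : j + ((s.toNat + N : ℕ) : ℤ) = s + ((j + N).toNat : ℕ) := by omega
  rw [hjs]
  exact hagree _ (by omega)

theorem substExt_mul_add {A : Type*} [Inhabited A] (τ : A → List A) {p : ℕ} (z : ℤ → A)
    (q : ℤ) {s : ℕ} (hs : s < p) :
    substExt τ p z (p * q + s) = (τ (z q)).getD s default := by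
  have hp : (0 : ℤ) < p := by omega
  have hdiv : ((p : ℤ) * q + s) / p = q := by
    rw [add_comm, Int.add_mul_ediv_left _ _ hp.ne', Int.ediv_eq_zero_of_lt (by positivity)
      (by exact_mod_cast hs), zero_add]
  have hmod : ((p : ℤ) * q + s) % p = s := by
    rw [add_comm, mul_comm, Int.add_mul_emod_self_right,
      Int.emod_eq_of_lt (by positivity) (by exact_mod_cast hs)]
  simp [substExt, hdiv, hmod]

/-- The residue modulo `p ^ i` of the odometer point with digits `ds`. -/
def digitsPrefix (p : ℕ) (ds : ℕ → ℕ) (i : ℕ) : ℕ :=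
  ∑ k ∈ range i, ds k * p ^ k

theorem digitsPrefix_succ (p : ℕ) (ds : ℕ → ℕ) (i : ℕ) :
    digitsPrefix p ds (i + 1) = digitsPrefix p ds i + ds i * p ^ i :=
  sum_range_succ _ i

theorem digitsPrefix_lt {p : ℕ} {ds : ℕ → ℕ} (hds : ∀ i, ds i < p) (i : ℕ) :
    digitsPrefix p ds i < p ^ i := by
  induction i with
  | zero => simp [digitsPrefix]
  | succ i ih =>
    have hdi : ds i * p ^ i ≤ (p - 1) * p ^ i := Nat.mul_le_mul_right _ (by have := hds i; omega)
    calc digitsPrefix p ds (i + 1) = digitsPrefix p ds i + ds i * p ^ i := digitsPrefix_succ ..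
      _ < p ^ i + (p - 1) * p ^ i := by omega
      _ = p ^ (i + 1) := by
        have hp : 1 ≤ p := Nat.one_le_of_lt (hds i)
        zify [hp]
        ring

section Desubstitution

variable {A : Type*} [Inhabited A] {τ : A → List A} {p : ℕ} {ds : ℕ → ℕ} {xs ys : ℕ → ℤ → A}

theorem desubst_apply_mul_add
    (hdx : ∀ i, substExt τ p (xs (i + 1)) = fun j => xs i (j - ds i))
    (i : ℕ) (q : ℤ) {s : ℕ} (hs : s < p) :
    xs i (p * q + s - ds i) = (τ (xs (i + 1) q)).getD s default := by
  rw [← substExt_mul_add τ _ q hs, hdx]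

theorem desubst_eq_of_eq
    (hdx : ∀ i, substExt τ p (xs (i + 1)) = fun j => xs i (j - ds i))
    (hdy : ∀ i, substExt τ p (ys (i + 1)) = fun j => ys i (j - ds i))
    (i : ℕ) (m : ℤ) (hm : xs i m = ys i m) (r : ℕ) (hr : r < p ^ i) :
    xs 0 (p ^ i * m - digitsPrefix p ds i + r) = ys 0 (p ^ i * m - digitsPrefix p ds i + r) := by
  induction i generalizing m r with
  | zero =>
    obtain rfl : r = 0 := by simpa using hr
    simpa [digitsPrefix] using hm
  | succ i ih =>
    have hpi : 0 < p ^ i := Nat.pos_of_ne_zero (by rintro h; simp [pow_succ, h] at hr)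
    have hdiv : r / p ^ i < p := Nat.div_lt_of_lt_mul (by rwa [← pow_succ])
    have hm' : xs i (p * m + (r / p ^ i : ℕ) - ds i) = ys i (p * m + (r / p ^ i : ℕ) - ds i) := by
      rw [desubst_apply_mul_add hdx i m hdiv, desubst_apply_mul_add hdy i m hdiv, hm]
    have hpos : (p : ℤ) ^ (i + 1) * m - digitsPrefix p ds (i + 1) + r
        = p ^ i * (p * m + (r / p ^ i : ℕ) - ds i) - digitsPrefix p ds i + (r % p ^ i : ℕ) := by
      have hr := Nat.div_add_mod r (p ^ i)
      zify at hr
      rw [digitsPrefix_succ]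
      push_cast
      linear_combination -hr
    rw [hpos]
    exact ih _ hm' _ (Nat.mod_lt _ hpi)

theorem exists_coincidence_ge
    (hdx : ∀ i, substExt τ p (xs (i + 1)) = fun j => xs i (j - ds i))
    (hdy : ∀ i, substExt τ p (ys (i + 1)) = fun j => ys i (j - ds i))
    (hds : ∀ i, ds i < p)
    (hcoin : ∀ a b : A, a ≠ b → ∃ j : ℕ, j < p ∧ (τ a).getD j default = (τ b).getD j default)
    (i B : ℕ) : ∃ m : ℤ, B ≤ m ∧ xs i m = ys i m := by
  have hp := hds i
  obtain ⟨j, hj, hcoin_j⟩ : ∃ j < p,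
      (τ (xs (i + 1) (B + 1))).getD j default = (τ (ys (i + 1) (B + 1))).getD j default := by
    by_cases h : xs (i + 1) (B + 1) = ys (i + 1) (B + 1)
    · exact ⟨0, by omega, by rw [h]⟩
    · exact hcoin _ _ h
  refine ⟨p * (B + 1) + j - ds i, by nlinarith, ?_⟩
  rw [desubst_apply_mul_add hdx i _ hj, desubst_apply_mul_add hdy i _ hj, hcoin_j]

theorem exists_long_agreement
    (hdx : ∀ i, substExt τ p (xs (i + 1)) = fun j => xs i (j - ds i))
    (hdy : ∀ i, substExt τ p (ys (i + 1)) = fun j => ys i (j - ds i))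
    (hds : ∀ i, ds i < p)
    (hcoin : ∀ a b : A, a ≠ b → ∃ j : ℕ, j < p ∧ (τ a).getD j default = (τ b).getD j default)
    (i B : ℕ) : ∃ s : ℤ, B ≤ s ∧ ∀ r : ℕ, r < p ^ i → xs 0 (s + r) = ys 0 (s + r) := by
  obtain ⟨m, hBm, hm⟩ := exists_coincidence_ge hdx hdy hds hcoin i (B + 1)
  have hc : (digitsPrefix p ds i : ℤ) + 1 ≤ p ^ i := by exact_mod_cast digitsPrefix_lt hds i
  have hpi : (0 : ℤ) ≤ p ^ i - 1 := by linarith [(digitsPrefix p ds i).cast_nonneg (α := ℤ)]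
  refine ⟨p ^ i * m - digitsPrefix p ds i, ?_, desubst_eq_of_eq hdx hdy i m hm⟩
  push_cast at hBm
  nlinarith

end Desubstitution

theorem stmt9_general {A : Type*} [Inhabited A]
    (τ : A → List A) (p : ℕ) (hp : 2 ≤ p)
    (hcoin : ∀ a b : A, a ≠ b →
      ∃ j : ℕ, j < p ∧ (τ a).getD j default = (τ b).getD j default)
    (x y : ℤ → A)
    -- the desubstitution sequences of `x` and `y` (Mossé's theorem), with a
    -- common digit sequence `ds`, i.e. `π(x) = π(y)`:
    (xs ys : ℕ → ℤ → A) (ds : ℕ → ℕ) (hds : ∀ i, ds i < p)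
    (hx0 : xs 0 = x) (hy0 : ys 0 = y)
    (hdx : ∀ i, substExt τ p (xs (i + 1)) = fun j => xs i (j - ds i))
    (hdy : ∀ i, substExt τ p (ys (i + 1)) = fun j => ys i (j - ds i)) :
    IsProximalPair x y := by
  subst hx0 hy0
  refine isProximalPair_of_forall_exists_agree fun L B => ?_
  obtain ⟨s, hBs, hagree⟩ := exists_long_agreement hdx hdy hds hcoin L B
  exact ⟨s, hBs, fun r hr => hagree r (hr.trans (Nat.lt_pow_self hp))⟩

/-- If a one-to-one primitive constant-length substitution with infinite
subshift has overall coincidences, then any two distinct points of `X_τ` with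
the same desubstitution digit sequence (i.e. the same image in the
`p`-odometer) form a proximal pair. -/
theorem stmt9 {A : Type*} [Fintype A] [Inhabited A]
    (τ : A → List A) (p : ℕ) (hp : 2 ≤ p)
    (hlen : ∀ a : A, (τ a).length = p)
    (hprim : IsPrimitive τ) (hinj : Function.Injective τ)
    (hinf : (XSet τ).Infinite)
    (hinjX : Set.InjOn (substExt τ p) (XSet τ))
    (hcoin : ∀ a b : A, a ≠ b →
      ∃ j : ℕ, j < p ∧ (τ a).getD j default = (τ b).getD j default)
    (x y : ℤ → A) (hx : x ∈ XSet τ) (hy : y ∈ XSet τ) (hxy : x ≠ y)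
    -- the desubstitution sequences of `x` and `y` (Mossé's theorem), with a
    -- common digit sequence `ds`, i.e. `π(x) = π(y)`:
    (xs ys : ℕ → ℤ → A) (ds : ℕ → ℕ) (hds : ∀ i, ds i < p)
    (hx0 : xs 0 = x) (hy0 : ys 0 = y)
    (hxs : ∀ i, xs i ∈ XSet τ) (hys : ∀ i, ys i ∈ XSet τ)
    (hdx : ∀ i, substExt τ p (xs (i + 1)) = fun j => xs i (j - ds i))
    (hdy : ∀ i, substExt τ p (ys (i + 1)) = fun j => ys i (j - ds i)) :
    IsProximalPair x y :=
  stmt9_general τ p hp hcoin x y xs ys ds hds hx0 hy0 hdx hdy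
end

section
/- Let A = {0,...,n} with n ≥ 1 and τₙ : A → A³ the constant-length-3 substitution τₙ(a) = a 0 (a+1) for a ≠ n and τₙ(n) = n 0 n. Then τₙ is primitive. -/
/-- The substitution `τₙ` on `{0,…,n}`: `τₙ(a) = a 0 (a+1)` for `a ≠ n` and
`τₙ(n) = n 0 n`. -/
def tauN (n : ℕ) : Fin (n + 1) → List (Fin (n + 1)) :=
  fun a => [a, ⟨0, Nat.succ_pos n⟩, ⟨min (a.1 + 1) n, by omega⟩]

/-! Every letter occurs in its own image under `τₙ`, so a letter present in `τₙᵏ(b)` stays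
present in all higher powers. Since `0 ∈ τₙ(b)` and `a + 1 ∈ τₙ(a)`, the letter `a` occurs in
`τₙ^(a+1)(b)`, hence every letter occurs in `τₙ^(n+1)(b)`. -/

section substWord

variable {A : Type*} {τ : A → List A}

lemma mem_substWord_of_mem {w : List A} {c d : A} (hc : c ∈ w) (hd : d ∈ τ c) :
    d ∈ substWord τ w :=
  List.mem_flatten.mpr ⟨τ c, List.mem_map_of_mem hc, hd⟩

lemma mem_iterate_substWord_of_le (hself : ∀ c, c ∈ τ c) {w : List A} {d : A} {k m : ℕ}
    (hd : d ∈ (substWord τ)^[k] w) (hkm : k ≤ m) : d ∈ (substWord τ)^[m] w := by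
  induction m, hkm using Nat.le_induction with
  | base => exact hd
  | succ m _ ih =>
    rw [Function.iterate_succ_apply']
    exact mem_substWord_of_mem ih (hself d)

end substWord

lemma self_mem_tauN {n : ℕ} (a : Fin (n + 1)) : a ∈ tauN n a := by
  simp [tauN]

lemma zero_mem_tauN {n : ℕ} (a : Fin (n + 1)) : 0 ∈ tauN n a := by
  simp [tauN, Fin.ext_iff]

lemma succ_mem_tauN_castSucc {n : ℕ} (a : Fin n) : a.succ ∈ tauN n a.castSucc := by
  simp [tauN, Fin.ext_iff]

lemma mem_iterate_tauN (n : ℕ) (a b : Fin (n + 1)) :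
    a ∈ (substWord (tauN n))^[a.val + 1] [b] := by
  induction a using Fin.induction with
  | zero => exact mem_substWord_of_mem (List.mem_singleton_self b) (zero_mem_tauN b)
  | succ a ih =>
    rw [Fin.val_succ, Function.iterate_succ_apply']
    exact mem_substWord_of_mem ih (succ_mem_tauN_castSucc a)

theorem stmt17_general (n : ℕ) : IsPrimitive (tauN n) :=
  ⟨n + 1, fun a b =>
    mem_iterate_substWord_of_le self_mem_tauN (mem_iterate_tauN n a b) (by omega)⟩

/-- For `n ≥ 1` the substitution `τₙ` is primitive. -/
theorem stmt17 (n : ℕ) (hn : 1 ≤ n) : IsPrimitive (tauN n) :=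
  stmt17_general n
end
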